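/- Let s_0, s_1, s_2 be the 3-hyperbolic functions. Then for all z ∈ ℂ: s_0(−z) = s_0(z)² − s_1(z)s_2(z), s_1(−z) = s_2(z)² − s_0(z)s_1(z), and s_2(−z) = s_1(z)² − s_0(z)s_2(z). -/

import Mathlib

/-!
Write `a = exp z`, `b = exp (z ζ)`, `c = exp (z ζ²)`. Since `1 + ζ + ζ² = 0` we have `abc = 1`,
so `exp (-z ζ^m)` is the product of the other two exponentials, while `3 s_k(z)` is the `k`-th
discrete Fourier coefficient of `(a, b, c)`. The three identities then become polynomial identities
in `a, b, c, ζ` that hold modulo `1 + ζ + ζ² = 0`; the ones for `s_1` and `s_2` are the same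
identity with `b` and `c` exchanged.
-/

open Complex Finset

noncomputable def zeta3 : ℂ := Complex.exp (2 * Real.pi * Complex.I / 3)

noncomputable def s3 (k : ℕ) (z : ℂ) : ℂ :=
  (1 / 3) * ∑ m ∈ Finset.range 3, ((zeta3 ^ m)⁻¹) ^ k * Complex.exp (z * zeta3 ^ m)

section CubeRoot

variable {R : Type*} [CommRing R] {ω : R}

theorem add_add_sq_sub_mul_eq (hω : 1 + ω + ω ^ 2 = 0) (a b c : R) :
    (a + b + c) ^ 2 - (a + ω ^ 2 * b + ω * c) * (a + ω * b + ω ^ 2 * c) =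
      3 * (a * b + b * c + c * a) := by
  linear_combination (-(b ^ 2 + c ^ 2 + ω * b * c) * (ω - 1) - (a * b + a * c + b * c)) * hω

theorem twisted_sq_sub_mul_eq (hω : 1 + ω + ω ^ 2 = 0) (a b c : R) :
    (a + ω * b + ω ^ 2 * c) ^ 2 - (a + b + c) * (a + ω ^ 2 * b + ω * c) =
      3 * (ω * (a * b) + b * c + ω ^ 2 * (c * a)) := by
  linear_combination ((ω ^ 2 - ω) * c ^ 2 - a * b - a * c + (2 * ω - 3) * b * c) * hω

end CubeRoot

theorem isPrimitiveRoot_zeta3 : IsPrimitiveRoot zeta3 3 :=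
  Complex.isPrimitiveRoot_exp 3 (by norm_num)

theorem one_add_zeta3_add_sq : 1 + zeta3 + zeta3 ^ 2 = 0 := by
  simpa [sum_range_succ] using isPrimitiveRoot_zeta3.geom_sum_eq_zero (by norm_num)

theorem zeta3_pow_three : zeta3 ^ 3 = 1 := isPrimitiveRoot_zeta3.pow_eq_one

theorem zeta3_inv : zeta3⁻¹ = zeta3 ^ 2 :=
  inv_eq_of_mul_eq_one_left (by rw [← pow_succ, zeta3_pow_three])

theorem s3_zero (z : ℂ) : s3 0 z = (exp z + exp (z * zeta3) + exp (z * zeta3 ^ 2)) / 3 := by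
  simp only [s3, sum_range_succ, sum_range_zero, pow_zero, one_mul, zero_add, pow_one, mul_one]
  ring

theorem s3_one (z : ℂ) :
    s3 1 z = (exp z + zeta3 ^ 2 * exp (z * zeta3) + zeta3 * exp (z * zeta3 ^ 2)) / 3 := by
  simp only [s3, sum_range_succ, sum_range_zero, ← inv_pow, zeta3_inv, ← pow_mul]
  norm_num [pow_eq_pow_mod 4 zeta3_pow_three]
  ring

theorem s3_two (z : ℂ) :
    s3 2 z = (exp z + zeta3 * exp (z * zeta3) + zeta3 ^ 2 * exp (z * zeta3 ^ 2)) / 3 := by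
  simp only [s3, sum_range_succ, sum_range_zero, ← inv_pow, zeta3_inv, ← pow_mul]
  norm_num [pow_eq_pow_mod 4 zeta3_pow_three, pow_eq_pow_mod 8 zeta3_pow_three]
  ring

theorem exp_neg_mul_zeta3_pow (z : ℂ) :
    exp (-z) = exp (z * zeta3) * exp (z * zeta3 ^ 2) ∧
    exp (-z * zeta3) = exp (z * zeta3 ^ 2) * exp z ∧
    exp (-z * zeta3 ^ 2) = exp z * exp (z * zeta3) := by
  refine ⟨?_, ?_, ?_⟩ <;> rw [← exp_add] <;> congr 1 <;>
    linear_combination -z * one_add_zeta3_add_sq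

theorem s3_opposite_argument (z : ℂ) :
    s3 0 (-z) = s3 0 z ^ 2 - s3 1 z * s3 2 z ∧
    s3 1 (-z) = s3 2 z ^ 2 - s3 0 z * s3 1 z ∧
    s3 2 (-z) = s3 1 z ^ 2 - s3 0 z * s3 2 z := by
  obtain ⟨e₀, e₁, e₂⟩ := exp_neg_mul_zeta3_pow z
  simp only [s3_zero, s3_one, s3_two, e₀, e₁, e₂]
  have hζ := one_add_zeta3_add_sq
  set a := exp z
  set b := exp (z * zeta3)
  set c := exp (z * zeta3 ^ 2)
  refine ⟨?_, ?_, ?_⟩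
  · linear_combination (-1 / 9) * add_add_sq_sub_mul_eq hζ a b c
  · linear_combination (-1 / 9) * twisted_sq_sub_mul_eq hζ a b c
  · linear_combination (-1 / 9) * twisted_sq_sub_mul_eq hζ a c b
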